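/- For every n ≥ 2 and every r ∈ ℕ, γ_r(G_n) > κ_n, where the inequality is strict in ℝ ∪ {+∞} (in particular it holds when γ_r(G_n) = +∞, i.e. when the defining program is infeasible). -/

import Mathlib

noncomputable section

open Filter Topology RealInnerProductSpace

/-- The unit sphere `S^{n-1}` in `ℝ^n`. -/
abbrev Sphere (n : ℕ) : Set (EuclideanSpace ℝ (Fin n)) :=
  Metric.sphere (0 : EuclideanSpace ℝ (Fin n)) 1

/-- The `r`-stack of a `d`-tensor `T`: `Stk^r(T)(u, w) = T(u)`. -/
def stk {α : Type*} (d r : ℕ) (T : (Fin d → α) → ℝ) : (Fin (d + r) → α) → ℝ :=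
  fun v => T fun i => v (Fin.castAdd r i)

/-- The symmetrization of a `d`-tensor:
`σ(T)(v) = (1/d!) ∑_{π ∈ Sym(d)} T(v ∘ π)`. -/
def tsym {α : Type*} (d : ℕ) (T : (Fin d → α) → ℝ) : (Fin d → α) → ℝ :=
  fun v => (d.factorial : ℝ)⁻¹ * ∑ π : Equiv.Perm (Fin d), T (v ∘ π)

/-- A symmetric two-variable function identified with a `2`-tensor. -/
def kerTensor {X : Type*} (K : X → X → ℝ) : (Fin 2 → X) → ℝ :=
  fun v => K (v 0) (v 1)

/-- A kernel: a continuous symmetric real-valued function of two variables. -/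
def IsKernel {X : Type*} [TopologicalSpace X] (K : X → X → ℝ) : Prop :=
  Continuous (fun p : X × X => K p.1 p.2) ∧ ∀ x y, K x y = K y x

/-- Positive semidefiniteness of a two-variable function. -/
def IsPSDKernel {X : Type*} (K : X → X → ℝ) : Prop :=
  ∀ (k : ℕ) (v : Fin k → X) (x : Fin k → ℝ),
    0 ≤ ∑ i, ∑ j, K (v i) (v j) * x i * x j

/-- Copositivity of a two-variable function. -/
def IsCopositiveKernel {X : Type*} (K : X → X → ℝ) : Prop :=
  ∀ (k : ℕ) (v : Fin k → X) (x : Fin k → ℝ), (∀ i, 0 ≤ x i) →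
    0 ≤ ∑ i, ∑ j, K (v i) (v j) * x i * x j

/-- An `(r+2)`-tensor `S` is 2-PSD if it is continuous and every slice
`(x, y) ↦ S(x, y, z)` is a PSD kernel. -/
def Is2PSD {X : Type*} [TopologicalSpace X] (r : ℕ)
    (S : (Fin (2 + r) → X) → ℝ) : Prop :=
  Continuous S ∧ ∀ z : Fin r → X, IsPSDKernel fun x y => S (Fin.append ![x, y] z)

/-- Membership in `C_r`: a kernel `M` with `σ(Stk^r M) = σ(N)` for some
nonnegative `(r+2)`-tensor `N`. -/
def memCr {X : Type*} [TopologicalSpace X] (r : ℕ) (M : X → X → ℝ) : Prop :=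
  IsKernel M ∧ ∃ N : (Fin (2 + r) → X) → ℝ, (∀ v, 0 ≤ N v) ∧
    tsym (2 + r) (stk 2 r (kerTensor M)) = tsym (2 + r) N

/-- Membership in `Q_r`: a kernel `M` with `σ(Stk^r M) = σ(N) + σ(S)` for some
nonnegative `(r+2)`-tensor `N` and 2-PSD `(r+2)`-tensor `S`. -/
def memQr {X : Type*} [TopologicalSpace X] (r : ℕ) (M : X → X → ℝ) : Prop :=
  IsKernel M ∧ ∃ N S : (Fin (2 + r) → X) → ℝ, (∀ v, 0 ≤ N v) ∧ Is2PSD r S ∧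
    tsym (2 + r) (stk 2 r (kerTensor M)) =
      fun v => tsym (2 + r) N v + tsym (2 + r) S v

/-- The kissing number `κ_n = α(G_n)`: the maximum cardinality of a finite set
of points on `S^{n-1}` with pairwise inner products at most `1/2`. -/
def kissingNumber (n : ℕ) : ℕ :=
  sSup {k : ℕ | ∃ X : Finset ↥(Sphere n),
    (∀ u ∈ X, ∀ v ∈ X, u ≠ v →
      ⟪(u : EuclideanSpace ℝ (Fin n)), (v : EuclideanSpace ℝ (Fin n))⟫ ≤ 1 / 2) ∧
    X.card = k}

/-- `γ_r(G_n) ∈ ℝ ∪ {+∞}`: the infimum of `λ ∈ ℝ` over pairs `(K, λ)` with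
`K ∈ C_r^{S^{n-1}}`, `K(v,v) = λ - 1` for all `v`, and `K(u,v) = -1` whenever
`⟪u,v⟫ ≤ 1/2`. -/
def gammaSph (n r : ℕ) : EReal :=
  sInf {x : EReal | ∃ l : ℝ, x = (l : EReal) ∧
    ∃ K : ↥(Sphere n) → ↥(Sphere n) → ℝ, memCr r K ∧
      (∀ v, K v v = l - 1) ∧
      ∀ u v : ↥(Sphere n),
        ⟪(u : EuclideanSpace ℝ (Fin n)), (v : EuclideanSpace ℝ (Fin n))⟫ ≤ 1 / 2 →
        K u v = -1}

/-- `ν_r(G_n) ∈ ℝ ∪ {+∞}`: as `γ_r(G_n)` with `Q_r^{S^{n-1}}` in place of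
`C_r^{S^{n-1}}`. -/
def nuSph (n r : ℕ) : EReal :=
  sInf {x : EReal | ∃ l : ℝ, x = (l : EReal) ∧
    ∃ K : ↥(Sphere n) → ↥(Sphere n) → ℝ, memQr r K ∧
      (∀ v, K v v = l - 1) ∧
      ∀ u v : ↥(Sphere n),
        ⟪(u : EuclideanSpace ℝ (Fin n)), (v : EuclideanSpace ℝ (Fin n))⟫ ≤ 1 / 2 →
        K u v = -1}

/-!
Let `(K, λ)` be feasible and `x₁, …, x_k` a kissing configuration. Evaluating
`σ(Stk^r K) = σ(N) ≥ 0` at `(x_{f 1}, …, x_{f (r+2)})` for a map `f : Fin (r+2) → Fin k` and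
averaging over the permutations gives `∑_{a ≠ b} K(x_{f a}, x_{f b}) ≥ 0`, that is
`λ · D(f) ≥ (r+2)(r+1)`, where `D(f)` counts the ordered pairs `a ≠ b` with `f a = f b`.
A uniformly random `f` has `E[D] = (r+2)(r+1)/k`, while the constant map has more collisions,
so some `f` has `k · D(f) < (r+2)(r+1)`. For that `f` every feasible `λ` exceeds `k` by at least
`1 / (D(f) + 1)`, a gap independent of `K`.
-/

open Finset

section PermAveraging

theorem exists_perm_apply_eq_pair {α : Type*} [DecidableEq α] {i₀ i₁ a b : α} (h : i₀ ≠ i₁)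
    (hab : a ≠ b) : ∃ ρ : Equiv.Perm α, ρ i₀ = a ∧ ρ i₁ = b := by
  set b' := Equiv.swap i₀ a i₁ with hb'
  have hab' : a ≠ b' := fun h' => h (by
    simpa [hb', Equiv.swap_apply_self] using congrArg (Equiv.swap i₀ a) h')
  refine ⟨Equiv.swap b' b * Equiv.swap i₀ a, ?_, ?_⟩
  · rw [Equiv.Perm.mul_apply, Equiv.swap_apply_left, Equiv.swap_apply_of_ne_of_ne hab' hab]
  · rw [Equiv.Perm.mul_apply, ← hb', Equiv.swap_apply_left]

variable {α : Type*} [Fintype α] {M : Type*} [AddCommMonoid M]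

theorem sum_offDiag_perm_apply (π : Equiv.Perm α) (F : α → α → M) :
    ∑ p ∈ univ.offDiag, F (π p.1) (π p.2) = ∑ p ∈ univ.offDiag, F p.1 p.2 :=
  sum_equiv (π.prodCongr π) (by simp [π.injective.eq_iff]) (fun _ _ => rfl)

variable [DecidableEq α]

theorem sum_perm_apply_pair_eq {i₀ i₁ a b : α} (h : i₀ ≠ i₁) (hab : a ≠ b) (F : α → α → M) :
    ∑ π : Equiv.Perm α, F (π a) (π b) = ∑ π : Equiv.Perm α, F (π i₀) (π i₁) := by
  obtain ⟨ρ, rfl, rfl⟩ := exists_perm_apply_eq_pair h hab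
  exact Equiv.sum_comp (Equiv.mulRight ρ) fun π : Equiv.Perm α => F (π i₀) (π i₁)

/-- Double counting of `∑_{p ∈ offDiag} ∑_π F (π p.1) (π p.2)`. -/
theorem card_offDiag_nsmul_sum_perm_apply {i₀ i₁ : α} (h : i₀ ≠ i₁) (F : α → α → M) :
    #(univ.offDiag : Finset (α × α)) • ∑ π : Equiv.Perm α, F (π i₀) (π i₁) =
      Fintype.card (Equiv.Perm α) • ∑ p ∈ univ.offDiag, F p.1 p.2 := by
  calc #(univ.offDiag : Finset (α × α)) • ∑ π : Equiv.Perm α, F (π i₀) (π i₁)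
      = ∑ p ∈ univ.offDiag, ∑ π : Equiv.Perm α, F (π p.1) (π p.2) := by
        rw [← sum_const]
        exact sum_congr rfl fun p hp => (sum_perm_apply_pair_eq h (mem_offDiag.1 hp).2.2 F).symm
    _ = ∑ π : Equiv.Perm α, ∑ p ∈ univ.offDiag, F (π p.1) (π p.2) := sum_comm
    _ = Fintype.card (Equiv.Perm α) • ∑ p ∈ univ.offDiag, F p.1 p.2 := by
        simp only [sum_offDiag_perm_apply, sum_const, card_univ]

end PermAveraging

section Collisions

variable {α β : Type*} [Fintype α] [Fintype β] [DecidableEq β]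

def collisionPairs (f : α → β) : Finset (α × α) :=
  univ.offDiag.filter fun p => f p.1 = f p.2

variable [DecidableEq α]

theorem card_subtype_apply_eq_apply_mul_card {a b : α} (hab : a ≠ b) :
    Fintype.card {f : α → β // f a = f b} * Fintype.card β = Fintype.card (α → β) := by
  rw [← Fintype.card_prod]
  refine Fintype.card_congr
    { toFun := fun fy => Function.update fy.1.1 b fy.2
      invFun := fun g => (⟨Function.update g b (g a), by simp [hab]⟩, g b)
      left_inv := fun ⟨⟨f, hf⟩, y⟩ => by simp [hab, ← hf]
      right_inv := fun g => by simp }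

theorem sum_card_collisionPairs_mul_card :
    (∑ f : α → β, #(collisionPairs f)) * Fintype.card β =
      #(univ.offDiag : Finset (α × α)) * Fintype.card (α → β) := by
  have hswap := sum_card_bipartiteAbove_eq_sum_card_bipartiteBelow
    (fun (f : α → β) (p : α × α) => f p.1 = f p.2) (s := univ) (t := univ.offDiag)
  simp only [bipartiteAbove, bipartiteBelow] at hswap
  unfold collisionPairs
  rw [hswap, sum_mul, ← smul_eq_mul, ← sum_const]
  refine sum_congr rfl fun p hp => ?_
  rw [← card_subtype_apply_eq_apply_mul_card (mem_offDiag.1 hp).2.2, Fintype.card_subtype]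

theorem exists_card_mul_card_collisionPairs_lt (hα : 1 < Fintype.card α)
    (hβ : 1 < Fintype.card β) :
    ∃ f : α → β, Fintype.card β * #(collisionPairs f) < #(univ.offDiag : Finset (α × α)) := by
  by_contra! hle
  obtain ⟨b₀⟩ : Nonempty β := Fintype.card_pos_iff.1 (by omega)
  have hconst : #(collisionPairs fun _ : α => b₀) = #(univ.offDiag : Finset (α × α)) := by
    unfold collisionPairs
    rw [filter_true_of_mem fun _ _ => rfl]
  have hoff : 0 < #(univ.offDiag : Finset (α × α)) := by
    rw [offDiag_card, card_univ]
    exact Nat.sub_pos_of_lt (by nlinarith)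
  have hlt : ∑ _f : α → β, #(univ.offDiag : Finset (α × α)) <
      ∑ f : α → β, Fintype.card β * #(collisionPairs f) :=
    sum_lt_sum (fun f _ => hle f) ⟨fun _ => b₀, mem_univ _, by
      rw [hconst]; exact lt_mul_left hoff hβ⟩
  rw [← mul_sum, mul_comm, sum_card_collisionPairs_mul_card, sum_const, card_univ,
    smul_eq_mul, mul_comm] at hlt
  exact lt_irrefl _ hlt

end Collisions

theorem memCr.sum_offDiag_nonneg {X : Type*} [TopologicalSpace X] {r : ℕ} {K : X → X → ℝ}
    (hK : memCr r K) (v : Fin (2 + r) → X) :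
    0 ≤ ∑ p ∈ univ.offDiag, K (v p.1) (v p.2) := by
  obtain ⟨-, N, hN, hKN⟩ := hK
  have hfact : (0 : ℝ) < ((2 + r).factorial : ℝ)⁻¹ := by positivity
  have hperm : 0 ≤ ∑ π : Equiv.Perm (Fin (2 + r)),
      K (v (π (Fin.castAdd r 0))) (v (π (Fin.castAdd r 1))) := by
    refine nonneg_of_mul_nonneg_right ?_ hfact
    change 0 ≤ tsym (2 + r) (stk 2 r (kerTensor K)) v
    rw [hKN]
    exact mul_nonneg hfact.le (sum_nonneg fun π _ => hN _)
  have hdc := card_offDiag_nsmul_sum_perm_apply (M := ℝ)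
    (show Fin.castAdd r (0 : Fin 2) ≠ Fin.castAdd r 1 by simp) fun a b => K (v a) (v b)
  rw [nsmul_eq_mul, nsmul_eq_mul] at hdc
  exact nonneg_of_mul_nonneg_right (hdc ▸ mul_nonneg (Nat.cast_nonneg _) hperm)
    (Nat.cast_pos.2 Fintype.card_pos)

theorem memCr.card_offDiag_le_mul_card_collisionPairs {X : Type*} [TopologicalSpace X] {r : ℕ}
    {K : X → X → ℝ} (hK : memCr r K) {ι : Type*} [DecidableEq ι] {x : ι → X} {l : ℝ}
    (hdiag : ∀ i, K (x i) (x i) = l - 1) (hoff : ∀ i j, i ≠ j → K (x i) (x j) = -1)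
    (f : Fin (2 + r) → ι) :
    (#(univ.offDiag : Finset (Fin (2 + r) × Fin (2 + r))) : ℝ) ≤ l * #(collisionPairs f) := by
  have hterm : ∀ p : Fin (2 + r) × Fin (2 + r),
      K (x (f p.1)) (x (f p.2)) = l * (if f p.1 = f p.2 then 1 else 0) - 1 := by
    intro p
    split_ifs with h
    · rw [h, hdiag]; ring
    · rw [hoff _ _ h]; ring
  have h := hK.sum_offDiag_nonneg (x ∘ f)
  simp only [Function.comp_apply, hterm, sum_sub_distrib, ← mul_sum, sum_boole, sum_const,
    nsmul_eq_mul, mul_one] at h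
  unfold collisionPairs
  linarith

section Sphere

variable {n : ℕ}

/-- An independent set of the graph `G_n`. -/
def IsKissingConfiguration (X : Finset ↥(Sphere n)) : Prop :=
  ∀ u ∈ X, ∀ v ∈ X, u ≠ v →
    ⟪(u : EuclideanSpace ℝ (Fin n)), (v : EuclideanSpace ℝ (Fin n))⟫ ≤ 1 / 2

def IsGammaFeasible (n r : ℕ) (l : ℝ) : Prop :=
  ∃ K : ↥(Sphere n) → ↥(Sphere n) → ℝ, memCr r K ∧
    (∀ v, K v v = l - 1) ∧
    ∀ u v : ↥(Sphere n),
      ⟪(u : EuclideanSpace ℝ (Fin n)), (v : EuclideanSpace ℝ (Fin n))⟫ ≤ 1 / 2 → K u v = -1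

theorem le_gammaSph {r : ℕ} {c : ℝ} (h : ∀ l, IsGammaFeasible n r l → c ≤ l) :
    (c : EReal) ≤ gammaSph n r :=
  le_sInf fun _ ⟨l, hx, hl⟩ => hx ▸ EReal.coe_le_coe_iff.2 (h l hl)

theorem exists_isKissingConfiguration_card_two (hn : 0 < n) :
    ∃ X : Finset ↥(Sphere n), IsKissingConfiguration X ∧ X.card = 2 := by
  classical
  set e : EuclideanSpace ℝ (Fin n) := EuclideanSpace.single ⟨0, hn⟩ 1
  have he : ‖e‖ = 1 := by simp [e]
  let u : ↥(Sphere n) := ⟨e, by simpa using he⟩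
  let w : ↥(Sphere n) := ⟨-e, by simpa using he⟩
  have hinner : ⟪e, -e⟫ = -1 := by
    rw [inner_neg_right, real_inner_self_eq_norm_sq, he]; norm_num
  have hne : u ≠ w := fun h => by
    have := congrArg (fun z : ↥(Sphere n) => ⟪e, (z : EuclideanSpace ℝ (Fin n))⟫) h
    simp only [u, w, hinner, real_inner_self_eq_norm_sq, he] at this
    norm_num at this
  refine ⟨{u, w}, ?_, card_pair hne⟩
  simp only [IsKissingConfiguration, mem_insert, mem_singleton]
  rintro a (rfl | rfl) b (rfl | rfl) hab
  all_goals first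
    | exact absurd rfl hab
    | simp only [u, w, hinner, inner_neg_left, real_inner_self_eq_norm_sq, he]
      norm_num

theorem exists_isKissingConfiguration_kissingNumber_le (hn : 0 < n) :
    ∃ X : Finset ↥(Sphere n), IsKissingConfiguration X ∧ kissingNumber n ≤ X.card ∧
      2 ≤ X.card := by
  obtain ⟨X₂, hX₂, hcard₂⟩ := exists_isKissingConfiguration_card_two hn
  set S := {k : ℕ | ∃ X : Finset ↥(Sphere n), IsKissingConfiguration X ∧ X.card = k}
  have hκ : kissingNumber n = sSup S := rfl
  have h₂S : 2 ∈ S := ⟨X₂, hX₂, hcard₂⟩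
  by_cases hS : BddAbove S
  · obtain ⟨X, hX, hXκ⟩ := Nat.sSup_mem ⟨2, h₂S⟩ hS
    refine ⟨X, hX, by rw [hκ, hXκ], ?_⟩
    rw [hXκ]
    exact le_csSup hS h₂S
  · -- `sSup` of an unbounded set of naturals is `0`.
    exact ⟨X₂, hX₂, by simp [hκ, Nat.sSup_of_not_bddAbove hS], hcard₂.ge⟩

theorem IsKissingConfiguration.card_lt_gammaSph {X : Finset ↥(Sphere n)}
    (hX : IsKissingConfiguration X) (hX₂ : 2 ≤ X.card) (r : ℕ) :
    ((X.card : ℝ) : EReal) < gammaSph n r := by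
  classical
  obtain ⟨f, hf⟩ := exists_card_mul_card_collisionPairs_lt (α := Fin (2 + r)) (β := X)
    (by simp; omega) (by rw [Fintype.card_coe]; omega)
  rw [Fintype.card_coe] at hf
  set D : ℕ := #(collisionPairs f)
  have hgap : ∀ l, IsGammaFeasible n r l → (X.card : ℝ) + 1 / (D + 1) ≤ l := by
    rintro l ⟨K, hK, hdiag, hedge⟩
    have hT := hK.card_offDiag_le_mul_card_collisionPairs (x := Subtype.val) (fun i => hdiag _)
      (fun i j hij => hedge _ _ (hX _ i.2 _ j.2 (Subtype.val_injective.ne hij))) f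
    have hkD : (X.card : ℝ) * D + 1 ≤ #(univ.offDiag : Finset (Fin (2 + r) × Fin (2 + r))) := by
      exact_mod_cast hf
    have hD : (0 : ℝ) ≤ D := Nat.cast_nonneg _
    have hlD : 1 ≤ (l - X.card) * D := by nlinarith
    have hlk : 0 < l - X.card := by nlinarith
    rw [← le_sub_iff_add_le', div_le_iff₀ (by positivity)]
    nlinarith
  calc ((X.card : ℝ) : EReal) < ((X.card + 1 / (D + 1) : ℝ) : EReal) :=
        EReal.coe_lt_coe_iff.2 (lt_add_of_pos_right _ (by positivity))
    _ ≤ gammaSph n r := le_gammaSph hgap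

end Sphere

/-- `γ_r(G_n) > κ_n` strictly in `ℝ ∪ {+∞}`. -/
theorem stmt13 (n : ℕ) (hn : 2 ≤ n) (r : ℕ) :
    ((kissingNumber n : ℝ) : EReal) < gammaSph n r := by
  obtain ⟨X, hX, hκX, hX₂⟩ := exists_isKissingConfiguration_kissingNumber_le (n := n) (by omega)
  calc ((kissingNumber n : ℝ) : EReal) ≤ ((X.card : ℝ) : EReal) := by exact_mod_cast hκX
    _ < gammaSph n r := hX.card_lt_gammaSph hX₂ r
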